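/- arXiv:1205.2285 — 7 statements merged into one kernel-verified Lean document; each statement's English description precedes it below -/
import Mathlib

section
/- Let n be a positive integer and let a_1, ..., a_n be positive real numbers, and let C, C' be positive reals such that (i) a_1 + ... + a_n ≤ C, (ii) a_i ≤ C' for every i, and (iii) C' ≥ C/√2. Then there exists a subset T ⊆ {1, ..., n} such that Σ_{i ∈ T} a_i ≤ C' and Σ_{i ∈ {1,...,n} \ T} a_i ≤ C'. -/
/-- Lemma 1 (subset-sum splitting lemma): for positive reals `a 1, ..., a n`
with total sum at most `C`, each at most `C'`, and `C' ≥ C / √2`, there is a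
subset `T` such that both the sum over `T` and the sum over its complement are
at most `C'`. -/
theorem subset_sum_split (n : ℕ) (hn : 0 < n) (a : Fin n → ℝ)
    (ha : ∀ i, 0 < a i) (C C' : ℝ) (hC : 0 < C) (hC' : 0 < C')
    (hsum : ∑ i, a i ≤ C) (hub : ∀ i, a i ≤ C')
    (hC'C : C' ≥ C / Real.sqrt 2) :
    ∃ T : Finset (Fin n), ∑ i ∈ T, a i ≤ C' ∧ ∑ i ∈ Tᶜ, a i ≤ C' := by
  classical
  -- the family of "feasible" subsets
  set S : Finset (Finset (Fin n)) :=
    Finset.univ.filter (fun T => ∑ i ∈ T, a i ≤ C') with hS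
  have hne : S.Nonempty := ⟨∅, by simp [hS, le_of_lt hC']⟩
  obtain ⟨T, hTS, hTmax⟩ := S.exists_max_image (fun T => ∑ i ∈ T, a i) hne
  have hT : ∑ i ∈ T, a i ≤ C' := by
    simpa [hS] using hTS
  refine ⟨T, hT, ?_⟩
  by_contra hcomp
  push_neg at hcomp
  have hsplit : ∑ i ∈ T, a i + ∑ i ∈ Tᶜ, a i = ∑ i, a i :=
    Finset.sum_add_sum_compl T a
  -- Tᶜ is nonempty
  have hTcne : Tᶜ.Nonempty := by
    rcases Finset.eq_empty_or_nonempty Tᶜ with h | h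
    · rw [h] at hcomp; simp at hcomp; linarith
    · exact h
  obtain ⟨j, hjTc, hjmin⟩ := Tᶜ.exists_min_image a hTcne
  -- maximality of T: inserting j exceeds C'
  have hins : C' < ∑ i ∈ insert j T, a i := by
    by_contra hle
    push_neg at hle
    have hmem : insert j T ∈ S := by simp [hS, hle]
    have := hTmax _ hmem
    have hjT : j ∉ T := by simpa using hjTc
    rw [Finset.sum_insert hjT] at this
    linarith [ha j]
  have hjT : j ∉ T := by simpa using hjTc
  rw [Finset.sum_insert hjT] at hins
  -- Tᶜ has at least two elements
  have h2 : ∃ k ∈ Tᶜ, k ≠ j := by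
    by_contra hk
    push_neg at hk
    have : Tᶜ = {j} := by
      apply Finset.eq_singleton_iff_unique_mem.mpr
      exact ⟨hjTc, hk⟩
    rw [this, Finset.sum_singleton] at hcomp
    exact absurd (hub j) (not_le.mpr hcomp)
  obtain ⟨k, hkTc, hkj⟩ := h2
  have hsub : ({j, k} : Finset (Fin n)) ⊆ Tᶜ := by
    intro x hx
    simp only [Finset.mem_insert, Finset.mem_singleton] at hx
    rcases hx with rfl | rfl <;> assumption
  have hpair : a j + a k ≤ ∑ i ∈ Tᶜ, a i := by
    have := Finset.sum_le_sum_of_subset_of_nonneg hsub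
      (fun i _ _ => (ha i).le)
    rwa [Finset.sum_pair (Ne.symm hkj)] at this
  have hjk : a j ≤ a k := hjmin k hkTc
  -- so ∑ Tᶜ ≥ 2 * a j
  have h2aj : 2 * a j ≤ ∑ i ∈ Tᶜ, a i := by linarith
  -- arithmetic contradiction
  have hsqrt2 : Real.sqrt 2 < 3 / 2 := by
    rw [show (3:ℝ)/2 = Real.sqrt ((3/2)^2) by
      rw [Real.sqrt_sq]; norm_num]
    apply Real.sqrt_lt_sqrt <;> norm_num
  have hsqrtpos : 0 < Real.sqrt 2 := Real.sqrt_pos.mpr (by norm_num)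
  have hCle : C ≤ C' * Real.sqrt 2 := by
    rw [ge_iff_le, div_le_iff₀ hsqrtpos] at hC'C
    exact hC'C
  -- C ≥ ∑T + s > (C' - a j) + s ≥ C' + s/2 > 3C'/2
  have hClt : 3 / 2 * C' < C := by
    have h1 : ∑ i ∈ T, a i + ∑ i ∈ Tᶜ, a i ≤ C := by linarith
    linarith
  nlinarith [mul_pos hC' hsqrtpos]
end

section
/- Let K be a finite index set, C a positive real, and d : K → ℂ demands with Re d_k ≥ 0 and Im d_k ≥ 0 for every k ∈ K. If S ⊆ K satisfies |Σ_{k∈S} d_k| ≤ C, then there is at most one k ∈ S with Re d_k + Im d_k > C. Equivalently, for any two distinct j, k ∈ S, it is not the case that both Re d_j + Im d_j > C and Re d_k + Im d_k > C. -/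
/-! Two demands with `Re + Im > C` already push the sum of real and imaginary parts of the
total demand above `2C`, since the remaining demands only add nonnegative parts; but
`Re z + Im z ≤ 2‖z‖` for every `z`, so the total demand has magnitude above `C`. -/

namespace Complex

theorem re_add_im_le_two_mul_norm (z : ℂ) : z.re + z.im ≤ 2 * ‖z‖ := by
  linarith [re_le_norm z, im_le_norm z]

theorem re_sum_add_im_sum {ι : Type*} (s : Finset ι) (f : ι → ℂ) :
    (∑ i ∈ s, f i).re + (∑ i ∈ s, f i).im = ∑ i ∈ s, ((f i).re + (f i).im) := by
  rw [re_sum, im_sum, Finset.sum_add_distrib]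

end Complex

theorem at_most_one_in_D2_general {K : Type*} (C : ℝ)
    (d : K → ℂ) (hre : ∀ k, 0 ≤ (d k).re) (him : ∀ k, 0 ≤ (d k).im)
    (S : Finset K) (hS : ‖∑ k ∈ S, d k‖ ≤ C) :
    ∀ j ∈ S, ∀ k ∈ S,
      C < (d j).re + (d j).im → C < (d k).re + (d k).im → j = k := by
  classical
  intro j hj k hk hCj hCk
  by_contra hne
  have hpair : ({j, k} : Finset K) ⊆ S :=
    Finset.insert_subset hj (Finset.singleton_subset_iff.2 hk)
  have key : (d j).re + (d j).im + ((d k).re + (d k).im) ≤ 2 * C :=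
    calc (d j).re + (d j).im + ((d k).re + (d k).im)
        = ∑ i ∈ {j, k}, ((d i).re + (d i).im) := by rw [Finset.sum_pair hne]
      _ ≤ ∑ i ∈ S, ((d i).re + (d i).im) :=
          Finset.sum_le_sum_of_subset_of_nonneg hpair fun i _ _ => add_nonneg (hre i) (him i)
      _ = (∑ i ∈ S, d i).re + (∑ i ∈ S, d i).im := (Complex.re_sum_add_im_sum S d).symm
      _ ≤ 2 * ‖∑ i ∈ S, d i‖ := Complex.re_add_im_le_two_mul_norm _
      _ ≤ 2 * C := by gcongr
  linarith

/-- A feasible C-KP solution contains at most one demand in the region `D₂`: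
if `S` is feasible (the magnitude of the demand sum is at most `C`), then any
two members of `S` whose demands satisfy `Re + Im > C` must coincide. -/
theorem at_most_one_in_D2 {K : Type*} [Fintype K] (C : ℝ) (hC : 0 < C)
    (d : K → ℂ) (hre : ∀ k, 0 ≤ (d k).re) (him : ∀ k, 0 ≤ (d k).im)
    (S : Finset K) (hS : ‖∑ k ∈ S, d k‖ ≤ C) :
    ∀ j ∈ S, ∀ k ∈ S,
      C < (d j).re + (d j).im → C < (d k).re + (d k).im → j = k :=
  at_most_one_in_D2_general C d hre him S hS
end

section
/- Let K be a finite index set, C > 0, and d : K → ℂ with Re d_k ≥ 0 and Im d_k ≥ 0 for every k ∈ K. Suppose S ⊆ K satisfies |Σ_{k∈S} d_k| ≤ C and Re d_k + Im d_k ≤ C for every k ∈ S. Then there exists T ⊆ S such that Re(Σ_{k∈T} d_k) + Im(Σ_{k∈T} d_k) ≤ C and Re(Σ_{k∈S\T} d_k) + Im(Σ_{k∈S\T} d_k) ≤ C. -/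
/-! Project every demand onto the diagonal, `p k = Re d_k + Im d_k`. Each `p k` is at most `C`,
and `Re z + Im z ≤ √2 ‖z‖` bounds the total by `√2 C ≤ 3C/2`. A subset `T` of maximal cardinality
with `∑_T p ≤ C` leaves a complement of sum at most `C`: otherwise the complement contains two
elements `j ≠ k`, each of which overflows `T`, and `2 ∑_S p > 3C` follows. -/

namespace Finset

variable {ι : Type*} [DecidableEq ι]

lemma exists_subset_sum_le_forall_sdiff_lt (S : Finset ι) (p : ι → ℝ) {C : ℝ} (hC : 0 ≤ C) :
    ∃ T ⊆ S, ∑ k ∈ T, p k ≤ C ∧ ∀ k ∈ S \ T, C < ∑ i ∈ T, p i + p k := by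
  have hne : (S.powerset.filter fun U => ∑ k ∈ U, p k ≤ C).Nonempty := ⟨∅, by simp [hC]⟩
  obtain ⟨T, hT, hTmax⟩ := exists_max_image _ card hne
  rw [mem_filter, mem_powerset] at hT
  refine ⟨T, hT.1, hT.2, fun k hk => ?_⟩
  obtain ⟨hkS, hkT⟩ := mem_sdiff.mp hk
  by_contra! hle
  have hins := hTmax (insert k T) <| by
    rw [mem_filter, mem_powerset, sum_insert hkT, add_comm]
    exact ⟨insert_subset hkS hT.1, hle⟩
  rw [card_insert_of_notMem hkT] at hins
  omega

lemma exists_subset_sum_le_sdiff_sum_le (S : Finset ι) (p : ι → ℝ) {C : ℝ}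
    (hp : ∀ k ∈ S, 0 ≤ p k) (hpC : ∀ k ∈ S, p k ≤ C) (hS : 2 * ∑ k ∈ S, p k ≤ 3 * C) :
    ∃ T ⊆ S, ∑ k ∈ T, p k ≤ C ∧ ∑ k ∈ S \ T, p k ≤ C := by
  have hC : 0 ≤ C := by linarith [sum_nonneg hp]
  obtain ⟨T, hTS, hT, hover⟩ := S.exists_subset_sum_le_forall_sdiff_lt p hC
  refine ⟨T, hTS, hT, ?_⟩
  by_contra! hR
  have hpR : ∀ k ∈ S \ T, 0 ≤ p k := fun k hk => hp k (mem_sdiff.mp hk).1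
  obtain ⟨j, hj, -⟩ := exists_ne_zero_of_sum_ne_zero (by linarith : ∑ k ∈ S \ T, p k ≠ 0)
  have hsplit_j := add_sum_erase _ p hj
  have hpj : p j ≤ C := hpC j (mem_sdiff.mp hj).1
  obtain ⟨k, hk, -⟩ :=
    exists_ne_zero_of_sum_ne_zero (by linarith : ∑ i ∈ (S \ T).erase j, p i ≠ 0)
  have hpk : p k ≤ ∑ i ∈ (S \ T).erase j, p i :=
    single_le_sum (fun i hi => hpR i (mem_of_mem_erase hi)) hk
  have htotal := sum_sdiff (f := p) hTS
  linarith [hover j hj, hover k (mem_of_mem_erase hk)]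

end Finset

lemma Complex.re_add_im_le_sqrt_two_mul_norm (z : ℂ) : z.re + z.im ≤ √2 * ‖z‖ := by
  rw [← Real.sqrt_sq (norm_nonneg z), ← Real.sqrt_mul zero_le_two]
  refine Real.le_sqrt_of_sq_le ?_
  rw [Complex.sq_norm, Complex.normSq_apply]
  nlinarith [sq_nonneg (z.re - z.im)]

lemma Complex.re_add_im_sum {ι : Type*} (S : Finset ι) (d : ι → ℂ) :
    (∑ k ∈ S, d k).re + (∑ k ∈ S, d k).im = ∑ k ∈ S, ((d k).re + (d k).im) := by
  rw [Complex.re_sum, Complex.im_sum, Finset.sum_add_distrib]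

theorem feasible_split_into_two_triangles_general {K : Type*} [DecidableEq K]
    (C : ℝ) (d : K → ℂ)
    (hre : ∀ k, 0 ≤ (d k).re) (him : ∀ k, 0 ≤ (d k).im)
    (S : Finset K) (hS : ‖∑ k ∈ S, d k‖ ≤ C)
    (hD1 : ∀ k ∈ S, (d k).re + (d k).im ≤ C) :
    ∃ T ⊆ S,
      (∑ k ∈ T, d k).re + (∑ k ∈ T, d k).im ≤ C ∧
      (∑ k ∈ S \ T, d k).re + (∑ k ∈ S \ T, d k).im ≤ C := by
  have hC : 0 ≤ C := (norm_nonneg _).trans hS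
  have hsqrt_two : √2 ≤ 3 / 2 := by
    rw [Real.sqrt_le_left (by norm_num)]; norm_num
  have htotal : 2 * ∑ k ∈ S, ((d k).re + (d k).im) ≤ 3 * C := by
    rw [← Complex.re_add_im_sum]
    nlinarith [Complex.re_add_im_le_sqrt_two_mul_norm (∑ k ∈ S, d k), Real.sqrt_nonneg 2]
  simp only [Complex.re_add_im_sum]
  exact S.exists_subset_sum_le_sdiff_sum_le _ (fun k _ => add_nonneg (hre k) (him k)) hD1 htotal

/-- Case (3) of the C-KP analysis: a feasible demand sum all of whose
individual demands lie in the triangle `D₁` can be split into two subset sums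
each lying in `D₁`. -/
theorem feasible_split_into_two_triangles {K : Type*} [Fintype K] [DecidableEq K]
    (C : ℝ) (hC : 0 < C) (d : K → ℂ)
    (hre : ∀ k, 0 ≤ (d k).re) (him : ∀ k, 0 ≤ (d k).im)
    (S : Finset K) (hS : ‖∑ k ∈ S, d k‖ ≤ C)
    (hD1 : ∀ k ∈ S, (d k).re + (d k).im ≤ C) :
    ∃ T ⊆ S,
      (∑ k ∈ T, d k).re + (∑ k ∈ T, d k).im ≤ C ∧
      (∑ k ∈ S \ T, d k).re + (∑ k ∈ S \ T, d k).im ≤ C :=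
  feasible_split_into_two_triangles_general C d hre him S hS hD1
end

section
/- Let K be a finite index set, C > 0, and d : K → ℂ with Re d_k ≥ 0, Im d_k ≥ 0 and |d_k| ≤ C for every k ∈ K. For each k define the modified demand d̃_k = min((Re d_k + Im d_k)/√2, C/√2). Then every S ⊆ K with Σ_{k∈S} d̃_k ≤ C/√2 satisfies |Σ_{k∈S} d_k| ≤ C. -/
/-! Each demand `z` in the first quadrant satisfies `‖z‖ ≤ min (Re z + Im z) C = √2 · d̃`, so by the
triangle inequality `‖∑ d_k‖ ≤ √2 · ∑ d̃_k ≤ √2 · C/√2 = C`. -/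

open Finset

theorem Complex.norm_le_re_add_im_of_nonneg {z : ℂ} (hre : 0 ≤ z.re) (him : 0 ≤ z.im) :
    ‖z‖ ≤ z.re + z.im := by
  simpa only [abs_of_nonneg hre, abs_of_nonneg him] using Complex.norm_le_abs_re_add_abs_im z

theorem norm_sum_le_mul_sum_of_norm_le_mul {ι E : Type*} [SeminormedAddCommGroup E]
    {s : Finset ι} {f : ι → E} {g : ι → ℝ} {c : ℝ}
    (h : ∀ i ∈ s, ‖f i‖ ≤ c * g i) : ‖∑ i ∈ s, f i‖ ≤ c * ∑ i ∈ s, g i :=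
  calc ‖∑ i ∈ s, f i‖ ≤ ∑ i ∈ s, ‖f i‖ := norm_sum_le _ _
    _ ≤ ∑ i ∈ s, c * g i := sum_le_sum h
    _ = c * ∑ i ∈ s, g i := (mul_sum _ _ _).symm

theorem mul_min_div_div_of_pos {a b c : ℝ} (hc : 0 < c) : c * min (a / c) (b / c) = min a b := by
  rw [mul_min_of_nonneg _ _ hc.le, mul_div_cancel₀ _ hc.ne', mul_div_cancel₀ _ hc.ne']

theorem algb_feasible_general {K : Type*} (C : ℝ)
    (d : K → ℂ) (hre : ∀ k, 0 ≤ (d k).re) (him : ∀ k, 0 ≤ (d k).im)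
    (hmag : ∀ k, ‖d k‖ ≤ C)
    (dt : K → ℝ)
    (hdt : ∀ k, dt k = min (((d k).re + (d k).im) / Real.sqrt 2) (C / Real.sqrt 2))
    (S : Finset K) (hS : ∑ k ∈ S, dt k ≤ C / Real.sqrt 2) :
    ‖∑ k ∈ S, d k‖ ≤ C := by
  have h2 : (0 : ℝ) < √2 := by positivity
  have hdemand : ∀ k ∈ S, ‖d k‖ ≤ √2 * dt k := fun k _ => by
    rw [hdt k, mul_min_div_div_of_pos h2]
    exact le_min (Complex.norm_le_re_add_im_of_nonneg (hre k) (him k)) (hmag k)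
  calc ‖∑ k ∈ S, d k‖ ≤ √2 * ∑ k ∈ S, dt k := norm_sum_le_mul_sum_of_norm_le_mul hdemand
    _ ≤ √2 * (C / √2) := by gcongr
    _ = C := mul_div_cancel₀ _ h2.ne'

/-- Feasibility preservation of the monotone algorithm `Alg^b`: any solution
feasible for the 1-KP instance with modified demands
`d̃_k = min((Re d_k + Im d_k)/√2, C/√2)` and capacity `C/√2` is feasible for the
original C-KP instance. -/
theorem algb_feasible {K : Type*} [Fintype K] (C : ℝ) (hC : 0 < C)
    (d : K → ℂ) (hre : ∀ k, 0 ≤ (d k).re) (him : ∀ k, 0 ≤ (d k).im)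
    (hmag : ∀ k, ‖d k‖ ≤ C)
    (dt : K → ℝ)
    (hdt : ∀ k, dt k = min (((d k).re + (d k).im) / Real.sqrt 2) (C / Real.sqrt 2))
    (S : Finset K) (hS : ∑ k ∈ S, dt k ≤ C / Real.sqrt 2) :
    ‖∑ k ∈ S, d k‖ ≤ C :=
  algb_feasible_general C d hre him hmag dt hdt S hS
end

section
/- Let n be a positive integer and w_1, ..., w_n positive integers. Let W = Σ_{k=1}^n w_k and w_max = max_k w_k, and assume n·w_max > W. Let β = √(W / (n·w_max − W)) and C = √((W/2)² + β²·(n·w_max/2 − W/2)²). Then for all real numbers x, y with x² + y² ≤ C² and y ≥ β·(n·w_max/2 − x), one has x = W/2 and y = β·(n·w_max/2 − W/2). -/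
set_option maxHeartbeats 1000000 in
/-- Tangency claim in the inapproximability proof for C-KP: with
`β = √(W/(n·w_max − W))` and `C` the distance from the origin to the point
`P = (W/2, β(n·w_max/2 − W/2))`, the halfplane `y ≥ β(n·w_max/2 − x)` meets the
disk of radius `C` exactly in the point `P`. -/
theorem halfplane_meets_disk_at_tangency (n : ℕ) (hn : 0 < n)
    (w : Fin n → ℤ) (hw : ∀ k, 1 ≤ w k)
    (W : ℤ) (hW : W = ∑ k, w k)
    (wmax : ℤ) (hwmax_ub : ∀ k, w k ≤ wmax) (hwmax_mem : ∃ k, w k = wmax)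
    (hlt : W < (n : ℤ) * wmax)
    (β : ℝ) (hβ : β = Real.sqrt ((W : ℝ) / ((n : ℝ) * (wmax : ℝ) - (W : ℝ))))
    (C : ℝ) (hC : C = Real.sqrt (((W : ℝ) / 2) ^ 2 +
      β ^ 2 * ((n : ℝ) * (wmax : ℝ) / 2 - (W : ℝ) / 2) ^ 2)) :
    ∀ x y : ℝ, x ^ 2 + y ^ 2 ≤ C ^ 2 →
      β * ((n : ℝ) * (wmax : ℝ) / 2 - x) ≤ y →
      x = (W : ℝ) / 2 ∧ y = β * ((n : ℝ) * (wmax : ℝ) / 2 - (W : ℝ) / 2) := by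
  intro x y h1 h2
  set m : ℝ := (n : ℝ) * (wmax : ℝ) with hm
  -- W is positive
  have hWn : (n : ℤ) ≤ W := by
    rw [hW]
    calc (n : ℤ) = ∑ _k : Fin n, 1 := by simp
    _ ≤ ∑ k, w k := Finset.sum_le_sum fun k _ => hw k
  have hWpos : (0 : ℝ) < (W : ℝ) := by
    have : (0 : ℤ) < W := lt_of_lt_of_le (by exact_mod_cast hn) hWn
    exact_mod_cast this
  have hd : (0 : ℝ) < m - (W : ℝ) := by
    have h : ((W:ℤ) : ℝ) < (((n:ℤ) * wmax : ℤ) : ℝ) := by exact_mod_cast hlt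
    push_cast at h
    rw [hm]; linarith
  have hβ2 : β ^ 2 = (W : ℝ) / (m - (W : ℝ)) := by
    rw [hβ, Real.sq_sqrt (le_of_lt (div_pos hWpos hd))]
  have hβpos : 0 < β := by
    rw [hβ]; exact Real.sqrt_pos.mpr (div_pos hWpos hd)
  set b : ℝ := β * (m / 2 - (W : ℝ) / 2) with hb
  have hbpos : 0 < b := by
    apply mul_pos hβpos; linarith
  have hab : β * b = (W : ℝ) / 2 := by
    rw [hb]
    have : β * (β * (m / 2 - (W : ℝ) / 2)) = β ^ 2 * (m - (W : ℝ)) / 2 := by ring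
    rw [this, hβ2]
    field_simp
  have hC2 : C ^ 2 = ((W : ℝ) / 2) ^ 2 + b ^ 2 := by
    rw [hC, Real.sq_sqrt (by positivity), hb]
    ring
  rw [hC2] at h1
  have h1' : x ^ 2 + y ^ 2 ≤ (β ^ 2 + 1) * b ^ 2 := by nlinarith [hab]
  have hline : (β ^ 2 + 1) * b = β * (m / 2) := by
    linear_combination β * hab + hb
  have h2' : (β ^ 2 + 1) * b ≤ β * x + y := by rw [hline]; linarith
  -- key: the point must equal P
  have key : (x - β * b) ^ 2 + (y - b) ^ 2 ≤ 0 := by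
    nlinarith [h1', mul_le_mul_of_nonneg_left h2' (by linarith : (0:ℝ) ≤ 2 * b)]
  have hx0 : (x - β * b) ^ 2 = 0 :=
    le_antisymm (by nlinarith [sq_nonneg (y - b)]) (sq_nonneg _)
  have hy0 : (y - b) ^ 2 = 0 :=
    le_antisymm (by nlinarith [sq_nonneg (x - β * b)]) (sq_nonneg _)
  have hx : x = β * b := by
    have := pow_eq_zero_iff (n := 2) (by norm_num) |>.mp hx0
    linarith [this]
  have hy : y = b := by
    have := pow_eq_zero_iff (n := 2) (by norm_num) |>.mp hy0
    linarith [this]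
  exact ⟨by rw [hx, hab], hy⟩
end

section
/- Let n be a positive integer and w : {1,...,n} → ℤ with w_k ≥ 1 for all k. Let W = Σ_{k=1}^n w_k and w_max = max_k w_k, and assume n·w_max > W. Let β = √(W / (n·w_max − W)), C = √((W/2)² + β²·(n·w_max/2 − W/2)²), and for each k let d_k be the complex number with Re d_k = w_k and Im d_k = β·(w_max − w_k). If S ⊆ {1,...,n} satisfies 2·|S| ≥ n and |Σ_{k∈S} d_k| ≤ C, then 2·|S| = n and 2·Σ_{k∈S} w_k = W. -/
/-!
The demand sum `z` of `S` has real part `a = ∑_{k ∈ S} w_k` and imaginary part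
`β (|S| w_max - a)`, and `C = ‖p‖` for `p = W/2 + i β (n w_max - W)/2`, the demand sum of an
equipartition. Since `β² (n w_max - W) = W`, the inner product `⟪z, p⟫` collapses to
`W |S| w_max / 2`, which is at least `‖p‖² = W n w_max / 4` once `2 |S| ≥ n`. Then
`‖z - p‖² = ‖z‖² - 2 ⟪z, p⟫ + ‖p‖² ≤ 0`, so `z = p`, and comparing real and imaginary parts
gives both equalities.
-/

open Finset

theorem eq_of_norm_le_of_sq_norm_le_inner {E : Type*} [NormedAddCommGroup E]
    [InnerProductSpace ℝ E] {z p : E} (hz : ‖z‖ ≤ ‖p‖) (hp : ‖p‖ ^ 2 ≤ inner ℝ z p) :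
    z = p := by
  have hsq : ‖z - p‖ ^ 2 ≤ 0 := by
    rw [norm_sub_sq_real]
    nlinarith [norm_nonneg z]
  rw [← sub_eq_zero, ← norm_eq_zero]
  nlinarith [norm_nonneg (z - p)]

theorem Complex.sum_eq_mk_of_re_of_im {ι : Type*} {d : ι → ℂ} {w : ι → ℝ} {β c : ℝ}
    (hre : ∀ k, (d k).re = w k) (him : ∀ k, (d k).im = β * (c - w k)) (S : Finset ι) :
    ∑ k ∈ S, d k = ⟨∑ k ∈ S, w k, β * (#S * c - ∑ k ∈ S, w k)⟩ := by
  apply Complex.ext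
  · simp [Complex.re_sum, hre]
  · simp [Complex.im_sum, him, ← mul_sum, sum_sub_distrib]

theorem eq_half_of_norm_mk_le {W n c β a m : ℝ} (hW : 0 < W) (hc : 0 < c)
    (hβ : β ^ 2 * (n * c - W) = W) (hm : n ≤ 2 * m)
    (hfeas : ‖(⟨a, β * (m * c - a)⟩ : ℂ)‖ ≤ √((W / 2) ^ 2 + β ^ 2 * (n * c / 2 - W / 2) ^ 2)) :
    2 * m = n ∧ 2 * a = W := by
  set p : ℂ := ⟨W / 2, β * (n * c / 2 - W / 2)⟩
  have hnorm_p : ‖p‖ = √((W / 2) ^ 2 + β ^ 2 * (n * c / 2 - W / 2) ^ 2) := by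
    rw [Complex.norm_def, Complex.normSq_mk]
    ring_nf
  have hsq_p : ‖p‖ ^ 2 = W * n * c / 4 := by
    rw [hnorm_p, Real.sq_sqrt (by positivity)]
    linear_combination (n * c - W) / 4 * hβ
  have hinner : inner ℝ (⟨a, β * (m * c - a)⟩ : ℂ) p = W * m * c / 2 := by
    simp only [Complex.inner, p, Complex.mul_re, Complex.conj_re, Complex.conj_im]
    linear_combination (m * c - a) / 2 * hβ
  have heq := eq_of_norm_le_of_sq_norm_le_inner (hnorm_p ▸ hfeas)
    (by rw [hsq_p, hinner]; nlinarith [mul_pos hW hc])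
  obtain ⟨hre, him⟩ := Complex.ext_iff.mp heq
  simp only [p] at hre him
  have hβ0 : β ≠ 0 := by
    rintro rfl
    exact hW.ne' (by linear_combination -hβ)
  have him' : m * c - a = n * c / 2 - W / 2 := mul_left_cancel₀ hβ0 him
  refine ⟨mul_right_cancel₀ hc.ne' ?_, by linarith⟩
  linear_combination 2 * him' + 2 * hre

theorem ckp_reduction_backward_general (n : ℕ) (hn : 0 < n)
    (w : Fin n → ℤ) (hw : ∀ k, 1 ≤ w k)
    (W : ℤ) (hW : W = ∑ k, w k)
    (wmax : ℤ)
    (hlt : W < (n : ℤ) * wmax)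
    (β : ℝ) (hβ : β = Real.sqrt ((W : ℝ) / ((n : ℝ) * (wmax : ℝ) - (W : ℝ))))
    (C : ℝ) (hC : C = Real.sqrt (((W : ℝ) / 2) ^ 2 +
      β ^ 2 * ((n : ℝ) * (wmax : ℝ) / 2 - (W : ℝ) / 2) ^ 2))
    (d : Fin n → ℂ)
    (hd_re : ∀ k, (d k).re = (w k : ℝ))
    (hd_im : ∀ k, (d k).im = β * ((wmax : ℝ) - (w k : ℝ)))
    (S : Finset (Fin n)) (hcard : n ≤ 2 * S.card)
    (hfeas : ‖∑ k ∈ S, d k‖ ≤ C) :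
    2 * S.card = n ∧ 2 * ∑ k ∈ S, w k = W := by
  have hW_pos : 0 < W :=
    hW ▸ sum_pos (fun k _ ↦ zero_lt_one.trans_le (hw k))
      (univ_nonempty_iff.2 (Fin.pos_iff_nonempty.mp hn))
  have hwmax_pos : 0 < wmax := pos_of_mul_pos_right (hW_pos.trans hlt) n.cast_nonneg
  have hgap : (0 : ℝ) < n * wmax - W := sub_pos.2 (by exact_mod_cast hlt)
  have hβ_sq : β ^ 2 * (n * wmax - W) = W := by
    rw [hβ, Real.sq_sqrt (by positivity), div_mul_cancel₀ _ hgap.ne']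
  rw [Complex.sum_eq_mk_of_re_of_im hd_re hd_im, hC] at hfeas
  obtain ⟨hm, ha⟩ := eq_half_of_norm_mk_le (by exact_mod_cast hW_pos)
    (by exact_mod_cast hwmax_pos) hβ_sq (by exact_mod_cast hcard) hfeas
  exact ⟨by exact_mod_cast hm, by exact_mod_cast ha⟩

/-- Backward direction of the reduction from EQUIPARTITION to the decision
version of C-KP: any feasible solution of the reduced C-KP instance with
cardinality at least `n/2` must have cardinality exactly `n/2` and weight sum
exactly `W/2`. -/
theorem ckp_reduction_backward (n : ℕ) (hn : 0 < n)
    (w : Fin n → ℤ) (hw : ∀ k, 1 ≤ w k)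
    (W : ℤ) (hW : W = ∑ k, w k)
    (wmax : ℤ) (hwmax_ub : ∀ k, w k ≤ wmax) (hwmax_mem : ∃ k, w k = wmax)
    (hlt : W < (n : ℤ) * wmax)
    (β : ℝ) (hβ : β = Real.sqrt ((W : ℝ) / ((n : ℝ) * (wmax : ℝ) - (W : ℝ))))
    (C : ℝ) (hC : C = Real.sqrt (((W : ℝ) / 2) ^ 2 +
      β ^ 2 * ((n : ℝ) * (wmax : ℝ) / 2 - (W : ℝ) / 2) ^ 2))
    (d : Fin n → ℂ)
    (hd_re : ∀ k, (d k).re = (w k : ℝ))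
    (hd_im : ∀ k, (d k).im = β * ((wmax : ℝ) - (w k : ℝ)))
    (S : Finset (Fin n)) (hcard : n ≤ 2 * S.card)
    (hfeas : ‖∑ k ∈ S, d k‖ ≤ C) :
    2 * S.card = n ∧ 2 * ∑ k ∈ S, w k = W :=
  ckp_reduction_backward_general n hn w hw W hW wmax hlt β hβ C hC d hd_re hd_im S hcard hfeas
end

section
/- Let n be a positive integer and w : {1,...,n} → ℤ with w_k ≥ 1 for all k. Let W = Σ_{k=1}^n w_k and w_max = max_k w_k, and assume n·w_max > W. Let β = √(W / (n·w_max − W)), C = √((W/2)² + β²·(n·w_max/2 − W/2)²), and for each k let d_k be the complex number with Re d_k = w_k and Im d_k = β·(w_max − w_k). If S ⊆ {1,...,n} satisfies 2·|S| = n and 2·Σ_{k∈S} w_k = W, then |Σ_{k∈S} d_k| = C (in particular |Σ_{k∈S} d_k| ≤ C and 2·|S| ≥ n). -/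
/-!
On a set `S` the demands `d k = w k + i β (w_max - w k)` add up to
`∑_S w + i β (|S| w_max - ∑_S w)`. An equipartition has `∑_S w = W / 2` and `|S| = n / 2`,
so the sum is the point `W / 2 + i β (n w_max / 2 - W / 2)`, whose modulus is `C` by definition.
-/

open Finset

section DemandSum

variable {ι : Type*} (S : Finset ι) {d : ι → ℂ} {x : ι → ℝ} {β m : ℝ}

lemma re_sum_demands (hre : ∀ k, (d k).re = x k) :
    (∑ k ∈ S, d k).re = ∑ k ∈ S, x k := by
  simp only [Complex.re_sum, hre]

lemma im_sum_demands (him : ∀ k, (d k).im = β * (m - x k)) :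
    (∑ k ∈ S, d k).im = β * (#S * m - ∑ k ∈ S, x k) := by
  simp only [Complex.im_sum, him, ← mul_sum, sum_sub_distrib, sum_const, nsmul_eq_mul]

lemma norm_sum_demands (hre : ∀ k, (d k).re = x k) (him : ∀ k, (d k).im = β * (m - x k)) :
    ‖∑ k ∈ S, d k‖ = √((∑ k ∈ S, x k) ^ 2 + β ^ 2 * (#S * m - ∑ k ∈ S, x k) ^ 2) := by
  rw [Complex.norm_eq_sqrt_sq_add_sq, re_sum_demands S hre, im_sum_demands S him, mul_pow]

end DemandSum

theorem ckp_reduction_forward_general (n : ℕ) (w : Fin n → ℤ) (W : ℤ) (wmax : ℤ) (β : ℝ)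
    (C : ℝ) (hC : C = Real.sqrt (((W : ℝ) / 2) ^ 2 +
      β ^ 2 * ((n : ℝ) * (wmax : ℝ) / 2 - (W : ℝ) / 2) ^ 2))
    (d : Fin n → ℂ)
    (hd_re : ∀ k, (d k).re = (w k : ℝ))
    (hd_im : ∀ k, (d k).im = β * ((wmax : ℝ) - (w k : ℝ)))
    (S : Finset (Fin n)) (hcard : 2 * S.card = n)
    (hsum : 2 * ∑ k ∈ S, w k = W) :
    ‖∑ k ∈ S, d k‖ = C := by
  have hsumℝ : 2 * ∑ k ∈ S, (w k : ℝ) = W := by exact_mod_cast hsum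
  have hcardℝ : 2 * (#S : ℝ) = n := by exact_mod_cast hcard
  rw [norm_sum_demands S hd_re hd_im, hC, ← hsumℝ, ← hcardℝ]
  congr 1
  ring

/-- Forward direction of the reduction from EQUIPARTITION to the decision
version of C-KP: every EQUIPARTITION solution yields a feasible C-KP solution
meeting the cardinality bound, whose demand sum has magnitude exactly `C`. -/
theorem ckp_reduction_forward (n : ℕ) (hn : 0 < n)
    (w : Fin n → ℤ) (hw : ∀ k, 1 ≤ w k)
    (W : ℤ) (hW : W = ∑ k, w k)
    (wmax : ℤ) (hwmax_ub : ∀ k, w k ≤ wmax) (hwmax_mem : ∃ k, w k = wmax)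
    (hlt : W < (n : ℤ) * wmax)
    (β : ℝ) (hβ : β = Real.sqrt ((W : ℝ) / ((n : ℝ) * (wmax : ℝ) - (W : ℝ))))
    (C : ℝ) (hC : C = Real.sqrt (((W : ℝ) / 2) ^ 2 +
      β ^ 2 * ((n : ℝ) * (wmax : ℝ) / 2 - (W : ℝ) / 2) ^ 2))
    (d : Fin n → ℂ)
    (hd_re : ∀ k, (d k).re = (w k : ℝ))
    (hd_im : ∀ k, (d k).im = β * ((wmax : ℝ) - (w k : ℝ)))
    (S : Finset (Fin n)) (hcard : 2 * S.card = n)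
    (hsum : 2 * ∑ k ∈ S, w k = W) :
    ‖∑ k ∈ S, d k‖ = C :=
  ckp_reduction_forward_general n w W wmax β C hC d hd_re hd_im S hcard hsum
end
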